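/- Let V₁, …, V₆ be pairwise disjoint finite sets with an injective labeling v ↦ v̄ sending V₁ ∪ V₂ ∪ V₃ into [0.3, 0.4] and V₄ ∪ V₅ ∪ V₆ into [0, 0.1], and let E be a set of 3-element sets of vertices, each containing vertices from three distinct parts. Form the family F of unit hypercubes in ℝ¹⁰ (coordinates grouped into five consecutive pairs): for each hyperedge {a,b,c} ∈ E with a ∈ V₁, b ∈ V₂, c ∈ V₃, the cube centered at s_{abc} with pairs 1, 2, 3 equal to (ā, 1+ā), (b̄, 1+b̄), (c̄, 1+c̄) and pairs 4, 5 equal to (0.5, 0.5); for each hyperedge {d,e,f} ∈ E with d ∈ V₄, e ∈ V₅, f ∈ V₆, the cube centered at t_{def} with pairs 1, 2, 3 all equal to (1+d̄, d̄), pair 4 equal to (1+ē, ē), and pair 5 equal to (1+f̄, f̄); for each non-hyperedge triple consisting of vertices from three distinct parts but not all from V₁, V₂, V₃ and not all from V₄, V₅, V₆, a cube p whose pairs are: (1+x̄, x̄) in pair i for each of its vertices x ∈ Vᵢ with i ≤ 3, (z̄, 1+z̄) in pair 4 for a vertex z ∈ V₅, (z̄, 1+z̄) in pair 5 for a vertex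 z ∈ V₆, (z̄, 1+z̄) for a vertex z ∈ V₄ placed in the smallest-index pair among pairs 1, 2, 3 not used by the triple's vertices from V₁, V₂, V₃, and (0.5, 0.5) in all remaining pairs; and one cube centered at z₀ = (0.8, 0.2, 0.8, 0.2, 0.8, 0.2, 0.8, 0.2, 0.8, 0.2). If vertices a ∈ V₁, …, f ∈ V₆ form a 6-hyperclique, i.e. every 3-element subset of {a, b, c, d, e, f} with vertices from three distinct parts belongs to E, then in the intersection graph of F the cubes centered at s_{abc} and t_{def} are not adjacent and share no common neighbor, hence are at graph distance at least 3; in particular the intersection graph has diameter greater than 2. -/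
import Mathlib


noncomputable section

/-- Build a point of `ℝ¹⁰` out of five consecutive coordinate pairs. -/
def mk10 (pr : Fin 5 → ℝ × ℝ) : Fin 10 → ℝ :=
  ![(pr 0).1, (pr 0).2, (pr 1).1, (pr 1).2, (pr 2).1, (pr 2).2,
    (pr 3).1, (pr 3).2, (pr 4).1, (pr 4).2]

/-- The closed axis-parallel hypercube of side length 1 centered at `p ∈ ℝ¹⁰`. -/
def cube (p : Fin 10 → ℝ) : Set (Fin 10 → ℝ) :=
  {x | ∀ i, |x i - p i| ≤ 1 / 2}

/-- Center `s_{abc}`: pairs 1,2,3 are `(ā,1+ā)`, `(b̄,1+b̄)`, `(c̄,1+c̄)`;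
pairs 4,5 are `(0.5,0.5)`. -/
def sCtr (a b c : ℝ) : Fin 10 → ℝ :=
  mk10 ![(a, 1 + a), (b, 1 + b), (c, 1 + c), (0.5, 0.5), (0.5, 0.5)]

/-- Center `t_{def}`: pairs 1,2,3 are all `(1+d̄,d̄)`; pair 4 is `(1+ē,ē)`;
pair 5 is `(1+f̄,f̄)`. -/
def tCtr (d e f : ℝ) : Fin 10 → ℝ :=
  mk10 ![(1 + d, d), (1 + d, d), (1 + d, d), (1 + e, e), (1 + f, f)]

/-- The extra center `z₀ = (0.8, 0.2, …, 0.8, 0.2)`. -/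
def z10 : Fin 10 → ℝ :=
  mk10 ![(0.8, 0.2), (0.8, 0.2), (0.8, 0.2), (0.8, 0.2), (0.8, 0.2)]

open Classical in
/-- Pair `j ∈ {1,2,3}` of the cube of a non-hyperedge triple, where
`f i` is the label of the triple's vertex in part `i` (if any):
`(1+x̄, x̄)` if the triple has a vertex `x` in part `j ≤ 3`; `(z̄, 1+z̄)` for the
triple's vertex `z ∈ V₄` (if any) placed in the smallest-index pair among pairs
1,2,3 not used by the triple's vertices from `V₁, V₂, V₃`; `(0.5, 0.5)` otherwise. -/
def lowPair (f : Fin 6 → Option ℝ) (j : Fin 3) : ℝ × ℝ :=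
  match f (Fin.castLE (by omega) j) with
  | some x => (1 + x, x)
  | none =>
    match f 3 with
    | some z =>
      if ∀ k : Fin 3, k < j → (f (Fin.castLE (by omega) k)).isSome then (z, 1 + z)
      else (0.5, 0.5)
    | none => (0.5, 0.5)

/-- Pair 4 (resp. 5) of the cube of a non-hyperedge triple: `(z̄, 1+z̄)` for the
triple's vertex `z ∈ V₅` (resp. `V₆`) if any, and `(0.5, 0.5)` otherwise. -/
def highPair (f : Fin 6 → Option ℝ) (i : Fin 6) : ℝ × ℝ :=
  match f i with
  | some z => (z, 1 + z)
  | none => (0.5, 0.5)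

/-- Center of the cube of a non-hyperedge triple with part-indexed labels `f`. -/
def neCtr (f : Fin 6 → Option ℝ) : Fin 10 → ℝ :=
  mk10 ![lowPair f 0, lowPair f 1, lowPair f 2, highPair f 4, highPair f 5]

/-- The part-indexed labels of a triple of vertices (from distinct parts). -/
def tripleFun {Vt : Fin 6 → Type*} (ℓ : ((i : Fin 6) × Vt i) → ℝ)
    (u v w : (i : Fin 6) × Vt i) : Fin 6 → Option ℝ := fun i =>
  if u.1 = i then some (ℓ u) else if v.1 = i then some (ℓ v)
  else if w.1 = i then some (ℓ w) else none

/-- The family of centers of the unit hypercubes in `ℝ¹⁰` from the construction. -/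
def Fam (Vt : Fin 6 → Type*) (ℓ : ((i : Fin 6) × Vt i) → ℝ)
    (E : ((i : Fin 6) × Vt i) → ((i : Fin 6) × Vt i) → ((i : Fin 6) × Vt i) → Prop) :
    Set (Fin 10 → ℝ) :=
  {x | ∃ (a : Vt 0) (b : Vt 1) (c : Vt 2), E ⟨0, a⟩ ⟨1, b⟩ ⟨2, c⟩ ∧
        x = sCtr (ℓ ⟨0, a⟩) (ℓ ⟨1, b⟩) (ℓ ⟨2, c⟩)} ∪
  {x | ∃ (d : Vt 3) (e : Vt 4) (f : Vt 5), E ⟨3, d⟩ ⟨4, e⟩ ⟨5, f⟩ ∧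
        x = tCtr (ℓ ⟨3, d⟩) (ℓ ⟨4, e⟩) (ℓ ⟨5, f⟩)} ∪
  {x | ∃ u v w : (i : Fin 6) × Vt i,
        u.1 ≠ v.1 ∧ v.1 ≠ w.1 ∧ u.1 ≠ w.1 ∧
        ¬((u.1 : ℕ) < 3 ∧ (v.1 : ℕ) < 3 ∧ (w.1 : ℕ) < 3) ∧
        ¬(3 ≤ (u.1 : ℕ) ∧ 3 ≤ (v.1 : ℕ) ∧ 3 ≤ (w.1 : ℕ)) ∧
        ¬E u v w ∧ x = neCtr (tripleFun ℓ u v w)} ∪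
  {z10}

/-- The intersection graph of a family of unit hypercubes (given by their centers):
two distinct members are adjacent iff the corresponding hypercubes intersect. -/
def interGraph (F : Set (Fin 10 → ℝ)) : SimpleGraph ↥F :=
  SimpleGraph.fromRel fun u v => (cube u.1 ∩ cube v.1).Nonempty

/-! Auxiliary lemmas -/

lemma three_le_edist' {V : Type*} {G : SimpleGraph V} {u v : V} (h0 : u ≠ v) (h1 : ¬ G.Adj u v)
    (h2 : ∀ w, ¬(G.Adj u w ∧ G.Adj w v)) : 3 ≤ G.edist u v := by
  by_contra h
  push_neg at h
  have hne : G.edist u v ≠ ⊤ := fun ht => by simp [ht] at h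
  obtain ⟨p, hp⟩ := SimpleGraph.exists_walk_of_edist_ne_top hne
  have hl' : p.length < 3 := by
    have : (p.length : ℕ∞) < 3 := hp ▸ h
    exact_mod_cast this
  cases p with
  | nil => exact h0 rfl
  | cons ha q =>
    cases q with
    | nil => exact h1 ha
    | cons hb r =>
      cases r with
      | nil => exact h2 _ ⟨ha, hb⟩
      | cons hc s => simp [SimpleGraph.Walk.length_cons] at hl'; omega

lemma castLE0 : Fin.castLE (by omega : 3 ≤ 6) (0:Fin 3) = 0 := rfl
lemma castLE1 : Fin.castLE (by omega : 3 ≤ 6) (1:Fin 3) = 1 := rfl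
lemma castLE2 : Fin.castLE (by omega : 3 ≤ 6) (2:Fin 3) = 2 := rfl

lemma lowPair_some0 (g : Fin 6 → Option ℝ) {x : ℝ} (h : g 0 = some x) :
    lowPair g 0 = (1 + x, x) := by simp [lowPair, castLE0, h]
lemma lowPair_some1 (g : Fin 6 → Option ℝ) {x : ℝ} (h : g 1 = some x) :
    lowPair g 1 = (1 + x, x) := by simp [lowPair, castLE1, h]
lemma lowPair_some2 (g : Fin 6 → Option ℝ) {x : ℝ} (h : g 2 = some x) :
    lowPair g 2 = (1 + x, x) := by simp [lowPair, castLE2, h]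

lemma lowPair_place (g : Fin 6 → Option ℝ) {z : ℝ} (h3 : g 3 = some z)
    (hj : g 0 = none ∨ g 1 = none ∨ g 2 = none) :
    ∃ j : Fin 3, lowPair g j = (z, 1 + z) := by
  cases h0 : g 0 with
  | none =>
    refine ⟨0, ?_⟩
    simp only [lowPair, castLE0, h0, h3]
    rw [if_pos]
    intro k hk; exact absurd hk (by simp [Fin.lt_iff_val_lt_val])
  | some x0 =>
    cases h1 : g 1 with
    | none =>
      refine ⟨1, ?_⟩
      simp only [lowPair, castLE1, h1, h3]
      rw [if_pos]
      intro k hk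
      have : k = 0 := by omega
      subst this; simp [castLE0, h0]
    | some x1 =>
      have h2 : g 2 = none := by rcases hj with h|h|h <;> simp_all
      refine ⟨2, ?_⟩
      simp only [lowPair, castLE2, h2, h3]
      rw [if_pos]
      intro k hk
      have : k = 0 ∨ k = 1 := by omega
      rcases this with h|h <;> subst h <;> simp [castLE0, castLE1, h0, h1]

lemma highPair_some (g : Fin 6 → Option ℝ) {i : Fin 6} {z : ℝ} (h : g i = some z) :
    highPair g i = (z, 1 + z) := by simp [highPair, h]

lemma cube_inter_dist {p q : Fin 10 → ℝ} (h : (cube p ∩ cube q).Nonempty) (i : Fin 10) :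
    |p i - q i| ≤ 1 := by
  obtain ⟨x, hp, hq⟩ := h
  have h1 : |x i - p i| ≤ 1 / 2 := hp i
  have h2 : |x i - q i| ≤ 1 / 2 := hq i
  rw [abs_le] at *
  constructor <;> linarith [h1.1, h1.2, h2.1, h2.2]

lemma adj_dist {F : Set (Fin 10 → ℝ)} {u w : ↥F} (h : (interGraph F).Adj u w) (i : Fin 10) :
    |u.1 i - w.1 i| ≤ 1 := by
  rw [interGraph, SimpleGraph.fromRel_adj] at h
  rcases h.2 with h | h
  · exact cube_inter_dist h i
  · rw [abs_sub_comm]; exact cube_inter_dist h i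

lemma mk10_0 (pr : Fin 5 → ℝ × ℝ) : mk10 pr 0 = (pr 0).1 := rfl
lemma mk10_1 (pr : Fin 5 → ℝ × ℝ) : mk10 pr 1 = (pr 0).2 := rfl
lemma mk10_2 (pr : Fin 5 → ℝ × ℝ) : mk10 pr 2 = (pr 1).1 := rfl
lemma mk10_3 (pr : Fin 5 → ℝ × ℝ) : mk10 pr 3 = (pr 1).2 := rfl
lemma mk10_4 (pr : Fin 5 → ℝ × ℝ) : mk10 pr 4 = (pr 2).1 := rfl
lemma mk10_5 (pr : Fin 5 → ℝ × ℝ) : mk10 pr 5 = (pr 2).2 := rfl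
lemma mk10_6 (pr : Fin 5 → ℝ × ℝ) : mk10 pr 6 = (pr 3).1 := rfl
lemma mk10_7 (pr : Fin 5 → ℝ × ℝ) : mk10 pr 7 = (pr 3).2 := rfl
lemma mk10_8 (pr : Fin 5 → ℝ × ℝ) : mk10 pr 8 = (pr 4).1 := rfl
lemma mk10_9 (pr : Fin 5 → ℝ × ℝ) : mk10 pr 9 = (pr 4).2 := rfl

theorem stmt8 (Vt : Fin 6 → Type*) [∀ i, Fintype (Vt i)]
    (ℓ : ((i : Fin 6) × Vt i) → ℝ) (hinj : Function.Injective ℓ)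
    (hlow : ∀ w : (i : Fin 6) × Vt i, (w.1 : ℕ) < 3 → ℓ w ∈ Set.Icc (0.3 : ℝ) 0.4)
    (hhigh : ∀ w : (i : Fin 6) × Vt i, 3 ≤ (w.1 : ℕ) → ℓ w ∈ Set.Icc (0 : ℝ) 0.1)
    (E : ((i : Fin 6) × Vt i) → ((i : Fin 6) × Vt i) → ((i : Fin 6) × Vt i) → Prop)
    (hEsymm : ∀ u v w, E u v w → E v u w ∧ E u w v)
    (hEparts : ∀ u v w, E u v w → u.1 ≠ v.1 ∧ v.1 ≠ w.1 ∧ u.1 ≠ w.1)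
    (a : Vt 0) (b : Vt 1) (c : Vt 2) (d : Vt 3) (e : Vt 4) (f : Vt 5)
    (hclique : ∀ u v w : (i : Fin 6) × Vt i,
      u ∈ ({⟨0, a⟩, ⟨1, b⟩, ⟨2, c⟩, ⟨3, d⟩, ⟨4, e⟩, ⟨5, f⟩} : Set ((i : Fin 6) × Vt i)) →
      v ∈ ({⟨0, a⟩, ⟨1, b⟩, ⟨2, c⟩, ⟨3, d⟩, ⟨4, e⟩, ⟨5, f⟩} : Set ((i : Fin 6) × Vt i)) →
      w ∈ ({⟨0, a⟩, ⟨1, b⟩, ⟨2, c⟩, ⟨3, d⟩, ⟨4, e⟩, ⟨5, f⟩} : Set ((i : Fin 6) × Vt i)) →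
      u.1 ≠ v.1 → v.1 ≠ w.1 → u.1 ≠ w.1 → E u v w) :
    (∀ u v : ↥(Fam Vt ℓ E),
      u.1 = sCtr (ℓ ⟨0, a⟩) (ℓ ⟨1, b⟩) (ℓ ⟨2, c⟩) →
      v.1 = tCtr (ℓ ⟨3, d⟩) (ℓ ⟨4, e⟩) (ℓ ⟨5, f⟩) →
        ¬ (interGraph _).Adj u v ∧
        (∀ w, ¬ ((interGraph _).Adj u w ∧ (interGraph _).Adj w v)) ∧
        3 ≤ (interGraph _).edist u v) ∧
    2 < (interGraph (Fam Vt ℓ E)).ediam := by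
  have hA := Set.mem_Icc.mp (hlow ⟨0, a⟩ (by norm_num))
  have hB := Set.mem_Icc.mp (hlow ⟨1, b⟩ (by norm_num))
  have hC := Set.mem_Icc.mp (hlow ⟨2, c⟩ (by norm_num))
  have hD := Set.mem_Icc.mp (hhigh ⟨3, d⟩ (by rfl))
  have hE4 := Set.mem_Icc.mp (hhigh ⟨4, e⟩ (show (3:ℕ) ≤ 4 by norm_num))
  have hF := Set.mem_Icc.mp (hhigh ⟨5, f⟩ (show (3:ℕ) ≤ 5 by norm_num))
  -- key lemma: no member of the family is within distance 1 of both centers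
  have key : ∀ p ∈ Fam Vt ℓ E,
      ¬((∀ i, |sCtr (ℓ ⟨0, a⟩) (ℓ ⟨1, b⟩) (ℓ ⟨2, c⟩) i - p i| ≤ 1) ∧
        (∀ i, |p i - tCtr (ℓ ⟨3, d⟩) (ℓ ⟨4, e⟩) (ℓ ⟨5, f⟩) i| ≤ 1)) := by
    intro p hp
    simp only [Fam, Set.mem_union, Set.mem_setOf_eq, Set.mem_singleton_iff] at hp
    rcases hp with ((hp | hp) | hp) | hp
    · obtain ⟨a', b', c', hE', rfl⟩ := hp
      rintro ⟨-, h2⟩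
      have hA' := Set.mem_Icc.mp (hlow ⟨0, a'⟩ (by norm_num))
      have e2 := h2 1
      simp only [sCtr, tCtr, mk10] at e2
      rw [abs_le] at e2
      simp at e2
      linarith [e2.2, hA'.1, hD.2]
    · obtain ⟨d', e', f', hE', rfl⟩ := hp
      rintro ⟨h1, -⟩
      have hD' := Set.mem_Icc.mp (hhigh ⟨3, d'⟩ (by rfl))
      have e1 := h1 1
      simp only [sCtr, tCtr, mk10] at e1
      rw [abs_le] at e1
      simp at e1
      linarith [e1.1, hA.1, hD'.2]
    · obtain ⟨u₀, v₀, w₀, hd01, hd12, hd02, hnl, hnh, hnE, rfl⟩ := hp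
      rintro ⟨h1, h2⟩
      set g := tripleFun ℓ u₀ v₀ w₀ with hg
      have hgsome : ∀ i : Fin 6, (g i).isSome = true → i = u₀.1 ∨ i = v₀.1 ∨ i = w₀.1 := by
        intro i hi
        simp only [hg, tripleFun] at hi
        split_ifs at hi with a1 a2 a3
        · exact Or.inl a1.symm
        · exact Or.inr (Or.inl a2.symm)
        · exact Or.inr (Or.inr a3.symm)
        · simp at hi
      have hu0 : g u₀.1 = some (ℓ u₀) := by simp [hg, tripleFun]
      have hv0 : g v₀.1 = some (ℓ v₀) := by simp [hg, tripleFun, hd01]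
      have hw0 : g w₀.1 = some (ℓ w₀) := by simp [hg, tripleFun, hd02, hd12]
      have hmem : ∀ x : (i : Fin 6) × Vt i, g x.1 = some (ℓ x) →
          x ∈ ({⟨0, a⟩, ⟨1, b⟩, ⟨2, c⟩, ⟨3, d⟩, ⟨4, e⟩, ⟨5, f⟩} :
            Set ((i : Fin 6) × Vt i)) := by
        intro x hx
        have hcase : x.1 = 0 ∨ x.1 = 1 ∨ x.1 = 2 ∨ x.1 = 3 ∨ x.1 = 4 ∨ x.1 = 5 := by omega
        rcases hcase with h | h | h | h | h | h <;> rw [h] at hx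
        · have hlp := lowPair_some0 g hx
          have e1 := h1 0
          have e2 := h1 1
          simp [sCtr, neCtr, mk10_0, mk10_1, mk10_2, mk10_3, mk10_4, mk10_5, mk10_6, mk10_7, mk10_8, mk10_9, hlp] at e1 e2
          rw [abs_le] at e1 e2
          have heq : ℓ x = ℓ ⟨0, a⟩ := by linarith [e1.1, e2.2]
          simp [hinj heq]
        · have hlp := lowPair_some1 g hx
          have e1 := h1 2
          have e2 := h1 3
          simp [sCtr, neCtr, mk10_0, mk10_1, mk10_2, mk10_3, mk10_4, mk10_5, mk10_6, mk10_7, mk10_8, mk10_9, hlp] at e1 e2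
          rw [abs_le] at e1 e2
          have heq : ℓ x = ℓ ⟨1, b⟩ := by linarith [e1.1, e2.2]
          simp [hinj heq]
        · have hlp := lowPair_some2 g hx
          have e1 := h1 4
          have e2 := h1 5
          simp [sCtr, neCtr, mk10_0, mk10_1, mk10_2, mk10_3, mk10_4, mk10_5, mk10_6, mk10_7, mk10_8, mk10_9, hlp] at e1 e2
          rw [abs_le] at e1 e2
          have heq : ℓ x = ℓ ⟨2, c⟩ := by linarith [e1.1, e2.2]
          simp [hinj heq]
        · have hnone : g 0 = none ∨ g 1 = none ∨ g 2 = none := by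
            by_contra hcon
            push_neg at hcon
            have s0 := hgsome 0 (Option.ne_none_iff_isSome.mp hcon.1)
            have s1 := hgsome 1 (Option.ne_none_iff_isSome.mp hcon.2.1)
            have s2 := hgsome 2 (Option.ne_none_iff_isSome.mp hcon.2.2)
            have s3 := hgsome 3 (by rw [hx]; rfl)
            omega
          obtain ⟨j, hj⟩ := lowPair_place g hx hnone
          have heq : ℓ x = ℓ ⟨3, d⟩ := by
            have hjc : j = 0 ∨ j = 1 ∨ j = 2 := by omega
            rcases hjc with hc | hc | hc <;> rw [hc] at hj
            · have e1 := h2 0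
              have e2 := h2 1
              simp [tCtr, neCtr, mk10_0, mk10_1, mk10_2, mk10_3, mk10_4, mk10_5, mk10_6, mk10_7, mk10_8, mk10_9, hj] at e1 e2
              rw [abs_le] at e1 e2
              linarith [e1.1, e2.2]
            · have e1 := h2 2
              have e2 := h2 3
              simp [tCtr, neCtr, mk10_0, mk10_1, mk10_2, mk10_3, mk10_4, mk10_5, mk10_6, mk10_7, mk10_8, mk10_9, hj] at e1 e2
              rw [abs_le] at e1 e2
              linarith [e1.1, e2.2]
            · have e1 := h2 4
              have e2 := h2 5
              simp [tCtr, neCtr, mk10_0, mk10_1, mk10_2, mk10_3, mk10_4, mk10_5, mk10_6, mk10_7, mk10_8, mk10_9, hj] at e1 e2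
              rw [abs_le] at e1 e2
              linarith [e1.1, e2.2]
          simp [hinj heq]
        · have hhp := highPair_some g hx
          have e1 := h2 6
          have e2 := h2 7
          simp [tCtr, neCtr, mk10_0, mk10_1, mk10_2, mk10_3, mk10_4, mk10_5, mk10_6, mk10_7, mk10_8, mk10_9, hhp] at e1 e2
          rw [abs_le] at e1 e2
          have heq : ℓ x = ℓ ⟨4, e⟩ := by linarith [e1.1, e2.2]
          simp [hinj heq]
        · have hhp := highPair_some g hx
          have e1 := h2 8
          have e2 := h2 9
          simp [tCtr, neCtr, mk10_0, mk10_1, mk10_2, mk10_3, mk10_4, mk10_5, mk10_6, mk10_7, mk10_8, mk10_9, hhp] at e1 e2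
          rw [abs_le] at e1 e2
          have heq : ℓ x = ℓ ⟨5, f⟩ := by linarith [e1.1, e2.2]
          simp [hinj heq]
      exact hnE (hclique u₀ v₀ w₀ (hmem u₀ hu0) (hmem v₀ hv0) (hmem w₀ hw0) hd01 hd12 hd02)
    · subst hp
      rintro ⟨h1, -⟩
      have e1 := h1 1
      simp only [sCtr, z10, mk10] at e1
      rw [abs_le] at e1
      simp at e1
      linarith [e1.1, hA.1]
  have main : ∀ u v : ↥(Fam Vt ℓ E),
      u.1 = sCtr (ℓ ⟨0, a⟩) (ℓ ⟨1, b⟩) (ℓ ⟨2, c⟩) →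
      v.1 = tCtr (ℓ ⟨3, d⟩) (ℓ ⟨4, e⟩) (ℓ ⟨5, f⟩) →
        ¬ (interGraph _).Adj u v ∧
        (∀ w, ¬ ((interGraph _).Adj u w ∧ (interGraph _).Adj w v)) ∧
        3 ≤ (interGraph _).edist u v := by
    intro u v hu hv
    have hAdj : ¬ (interGraph (Fam Vt ℓ E)).Adj u v := by
      intro h
      have e1 := adj_dist h 1
      rw [hu, hv] at e1
      simp only [sCtr, tCtr, mk10] at e1
      rw [abs_le] at e1
      simp at e1
      linarith [e1.1, hA.1, hD.2]
    have hComm : ∀ w, ¬ ((interGraph (Fam Vt ℓ E)).Adj u w ∧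
        (interGraph (Fam Vt ℓ E)).Adj w v) := by
      rintro w ⟨hw1, hw2⟩
      refine key w.1 w.2 ⟨fun i => ?_, fun i => ?_⟩
      · rw [← hu]; exact adj_dist hw1 i
      · rw [← hv]; exact adj_dist hw2 i
    have hne : u ≠ v := by
      intro h
      have : u.1 = v.1 := congrArg _ h
      rw [hu, hv] at this
      have e1 := congrFun this 1
      simp only [sCtr, tCtr, mk10] at e1
      simp at e1
      linarith [hA.1, hD.2]
    exact ⟨hAdj, hComm, three_le_edist' hne hAdj hComm⟩
  refine ⟨main, ?_⟩
  have hEs : E ⟨0, a⟩ ⟨1, b⟩ ⟨2, c⟩ :=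
    hclique _ _ _ (by simp) (by simp) (by simp) (by simp) (by simp) (by simp)
  have hEt : E ⟨3, d⟩ ⟨4, e⟩ ⟨5, f⟩ :=
    hclique _ _ _ (by simp) (by simp) (by simp) (by simp) (by simp) (by simp)
  have hS : sCtr (ℓ ⟨0, a⟩) (ℓ ⟨1, b⟩) (ℓ ⟨2, c⟩) ∈ Fam Vt ℓ E :=
    Or.inl (Or.inl (Or.inl ⟨a, b, c, hEs, rfl⟩))
  have hT : tCtr (ℓ ⟨3, d⟩) (ℓ ⟨4, e⟩) (ℓ ⟨5, f⟩) ∈ Fam Vt ℓ E :=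
    Or.inl (Or.inl (Or.inr ⟨d, e, f, hEt, rfl⟩))
  have h3 := (main ⟨_, hS⟩ ⟨_, hT⟩ rfl rfl).2.2
  calc (2 : ℕ∞) < 3 := by norm_num
    _ ≤ (interGraph (Fam Vt ℓ E)).edist ⟨_, hS⟩ ⟨_, hT⟩ := h3
    _ ≤ (interGraph (Fam Vt ℓ E)).ediam := SimpleGraph.edist_le_ediam
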